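/- arXiv:1506.05758 — 4 statements merged into one kernel-verified Lean document; each statement's English description precedes it below -/
import Mathlib

section
/- Let (X, 𝔪) be a finite measure space and let λ denote Lebesgue measure on ℝ. For each n ∈ ℕ let f_n : X × ℝ → ℝ be measurable with 0 ≤ f_n ≤ 1 and such that for every x ∈ X the function ξ ↦ f_n(x, ξ) is non-increasing. Let f : X × ℝ → ℝ be a bounded measurable function such that ∫_{X×ℝ} f_n g d(𝔪⊗λ) → ∫_{X×ℝ} f g d(𝔪⊗λ) for every g ∈ L¹(𝔪⊗λ) (i.e. f_n → f weak* in L^∞(X×ℝ)). Then for 𝔪-almost every x ∈ X the following holds: for λ⊗λ-almost every pair (ξ₁, ξ₂) ∈ ℝ² with ξ₁ ≤ ξ₂ one has f(x, ξ₁) ≥ f(x, ξ₂). -/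
/-!
Translation `ξ ↦ ξ + t` preserves `𝔪 ⊗ λ`, so the translates `f n (x, ξ + t)` converge weak* to
`F (x, ξ + t)`. Weak* limits preserve a.e. inequalities (test against indicators of sets of finite
measure), hence `F (x, ξ + t) ≤ F (x, ξ)` a.e. for each fixed `t ≥ 0`. Fubini in `t` and the shear
`(ξ, t) ↦ (ξ, ξ + t)` of `ℝ²` turn this into the claim about pairs `ξ₁ ≤ ξ₂`.
-/

open MeasureTheory Filter Topology
open scoped ENNReal

theorem MeasureTheory.MemLp.integrableOn_of_measure_lt_top {α : Type*} [MeasurableSpace α]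
    {μ : Measure α} {q : ℝ≥0∞} {u : α → ℝ} (hu : MemLp u q μ) (hq : 1 ≤ q) {s : Set α}
    (hs : μ s < ∞) :
    IntegrableOn u s μ :=
  have : IsFiniteMeasure (μ.restrict s) := isFiniteMeasure_restrict.2 hs.ne
  (hu.restrict s).integrable hq

section WeakStar

variable {ι α β : Type*} [MeasurableSpace α] [MeasurableSpace β] {μ : Measure α} {ν : Measure β}

/-- Weak* convergence in `L^∞(μ) = L¹(μ)*`. Only meaningful for essentially bounded `f i` and `F`:
otherwise `f i * g` may fail to be integrable and its integral takes the junk value `0`. -/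
def WeakStarTendsto (μ : Measure α) (f : ι → α → ℝ) (l : Filter ι) (F : α → ℝ) : Prop :=
  ∀ g : α → ℝ, Integrable g μ →
    Tendsto (fun i => ∫ x, f i x * g x ∂μ) l (𝓝 (∫ x, F x * g x ∂μ))

variable {f : ι → α → ℝ} {l : Filter ι} {F : α → ℝ}

theorem WeakStarTendsto.comp_measurePreserving (hf : WeakStarTendsto μ f l F) (e : β ≃ᵐ α)
    (he : MeasurePreserving e ν μ) :
    WeakStarTendsto ν (fun i => f i ∘ e) l (F ∘ e) := by
  intro g hg
  have hg' : Integrable (g ∘ e.symm) μ :=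
    (he.symm.integrable_comp_emb e.symm.measurableEmbedding).2 hg
  have key (u : α → ℝ) : ∫ x, (u ∘ e) x * g x ∂ν = ∫ y, u y * (g ∘ e.symm) y ∂μ := by
    simpa using he.integral_comp' (fun y => u y * g (e.symm y))
  simpa only [key] using hf _ hg'

theorem WeakStarTendsto.tendsto_setIntegral (hf : WeakStarTendsto μ f l F) {s : Set α}
    (hs : MeasurableSet s) (hμs : μ s < ∞) :
    Tendsto (fun i => ∫ x in s, f i x ∂μ) l (𝓝 (∫ x in s, F x ∂μ)) := by
  have key (u : α → ℝ) : ∫ x, u x * s.indicator (fun _ => 1) x ∂μ = ∫ x in s, u x ∂μ := by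
    rw [← integral_indicator hs]
    congr with x
    by_cases hx : x ∈ s <;> simp [hx]
  simpa only [key] using
    hf _ ((integrable_indicator_iff hs).2 (integrableOn_const (C := (1 : ℝ)) hμs.ne))

theorem WeakStarTendsto.ae_le [SigmaFinite μ] [l.NeBot] {f₁ f₂ : ι → α → ℝ} {F₁ F₂ : α → ℝ}
    (h₁ : WeakStarTendsto μ f₁ l F₁) (h₂ : WeakStarTendsto μ f₂ l F₂)
    (hf₁ : ∀ i, MemLp (f₁ i) ∞ μ) (hf₂ : ∀ i, MemLp (f₂ i) ∞ μ)
    (hF₁ : MemLp F₁ ∞ μ) (hF₂ : MemLp F₂ ∞ μ) (hle : ∀ i, f₁ i ≤ᵐ[μ] f₂ i) : F₁ ≤ᵐ[μ] F₂ := by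
  have hint : ∀ {u : α → ℝ}, MemLp u ∞ μ → ∀ {s}, μ s < ∞ → IntegrableOn u s μ :=
    fun hu _ hs => hu.integrableOn_of_measure_lt_top le_top hs
  have hnonneg : 0 ≤ᵐ[μ] fun x => F₂ x - F₁ x :=
    ae_nonneg_of_forall_setIntegral_nonneg_of_sigmaFinite
      (fun _ _ hs => (hint hF₂ hs).sub (hint hF₁ hs)) fun s hs hμs => by
        rw [integral_sub (hint hF₂ hμs) (hint hF₁ hμs), sub_nonneg]
        exact le_of_tendsto_of_tendsto' (h₁.tendsto_setIntegral hs hμs)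
          (h₂.tendsto_setIntegral hs hμs)
          fun i => setIntegral_mono_ae (hint (hf₁ i) hμs) (hint (hf₂ i) hμs) (hle i)
  filter_upwards [hnonneg] with x hx
  exact sub_nonneg.1 hx

end WeakStar

theorem ae_ae_antitone_of_forall_ae_le_shift {X : Type*} [MeasurableSpace X] (𝔪 : Measure X)
    [SFinite 𝔪] {F : X × ℝ → ℝ} (hF : Measurable F)
    (h : ∀ t : ℝ, 0 ≤ t → ∀ᵐ p ∂(𝔪.prod volume), F (p.1, p.2 + t) ≤ F p) :
    ∀ᵐ x ∂𝔪, ∀ᵐ q : ℝ × ℝ, q.1 ≤ q.2 → F (x, q.2) ≤ F (x, q.1) := by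
  have hmeas : MeasurableSet
      {z : (X × ℝ) × ℝ | z.1.2 ≤ z.1.2 + z.2 → F (z.1.1, z.1.2 + z.2) ≤ F z.1} := by
    measurability
  have hprod : ∀ᵐ z ∂((𝔪.prod volume).prod volume),
      z.1.2 ≤ z.1.2 + z.2 → F (z.1.1, z.1.2 + z.2) ≤ F z.1 := by
    refine (Measure.ae_prod_iff_ae_ae hmeas).2 <|
      (Measure.ae_ae_comm hmeas).2 (ae_of_all _ fun t => ?_)
    rcases lt_or_ge t 0 with ht | ht
    · exact ae_of_all _ fun p hpt => absurd (le_add_iff_nonneg_right _ |>.1 hpt) ht.not_ge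
    · filter_upwards [h t ht] with p hp _ using hp
  let e : (X × ℝ) × ℝ ≃ᵐ X × ℝ × ℝ :=
    MeasurableEquiv.prodAssoc.trans
      ((MeasurableEquiv.refl X).prodCongr (MeasurableEquiv.shearAddRight ℝ))
  have he : MeasurePreserving e ((𝔪.prod volume).prod volume) (𝔪.prod (volume.prod volume)) :=
    (measurePreserving_prodAssoc 𝔪 volume volume).trans
      ((MeasurePreserving.id 𝔪).prod (measurePreserving_prod_add volume volume))
  rw [Measure.volume_eq_prod]
  refine Measure.ae_ae_of_ae_prod
    (p := fun w : X × ℝ × ℝ => w.2.1 ≤ w.2.2 → F (w.1, w.2.2) ≤ F (w.1, w.2.1)) ?_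
  rw [← he.map_eq, e.measurableEmbedding.ae_map_iff]
  exact hprod

/-- Any weak* limit in `L^∞(X × ℝ)` of `[0,1]`-valued measurable functions that are
non-increasing in the real variable `ξ` is, for `𝔪`-almost every `x`, almost everywhere
non-increasing in `ξ`. -/
theorem weakStar_limit_of_antitone_kinetic_functions
    {X : Type*} [MeasurableSpace X] (𝔪 : Measure X) [IsFiniteMeasure 𝔪]
    (f : ℕ → X × ℝ → ℝ)
    (hf_meas : ∀ n, Measurable (f n))
    (hf_mem : ∀ n p, f n p ∈ Set.Icc (0 : ℝ) 1)
    (hf_anti : ∀ n x, Antitone (fun ξ => f n (x, ξ)))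
    (F : X × ℝ → ℝ) (hF_meas : Measurable F)
    (C : ℝ) (hF_bdd : ∀ p, |F p| ≤ C)
    (hconv : ∀ g : X × ℝ → ℝ, Integrable g (𝔪.prod volume) →
      Tendsto (fun n => ∫ p, f n p * g p ∂(𝔪.prod volume)) atTop
        (nhds (∫ p, F p * g p ∂(𝔪.prod volume)))) :
    ∀ᵐ x ∂𝔪, ∀ᵐ q : ℝ × ℝ ∂(volume : Measure (ℝ × ℝ)),
      q.1 ≤ q.2 → F (x, q.2) ≤ F (x, q.1) := by
  have hf_top : ∀ n, MemLp (f n) ∞ (𝔪.prod volume) := fun n =>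
    memLp_top_of_bound (hf_meas n).aestronglyMeasurable 1 <| ae_of_all _ fun p =>
      abs_le.2 ⟨by linarith [(hf_mem n p).1], (hf_mem n p).2⟩
  have hF_top : MemLp F ∞ (𝔪.prod volume) :=
    memLp_top_of_bound hF_meas.aestronglyMeasurable C (ae_of_all _ hF_bdd)
  refine ae_ae_antitone_of_forall_ae_le_shift 𝔪 hF_meas fun t ht => ?_
  let shift : X × ℝ ≃ᵐ X × ℝ := (MeasurableEquiv.refl X).prodCongr (MeasurableEquiv.addRight t)
  have hshift : MeasurePreserving shift (𝔪.prod volume) (𝔪.prod volume) :=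
    (MeasurePreserving.id 𝔪).prod (measurePreserving_add_right volume t)
  exact (WeakStarTendsto.comp_measurePreserving hconv shift hshift).ae_le hconv
    (fun n => (hf_top n).comp_measurePreserving hshift) hf_top
    (hF_top.comp_measurePreserving hshift) hF_top
    fun n => ae_of_all _ fun p => hf_anti n p.1 (le_add_of_nonneg_right ht)
end

section
/- Let μ : ℝ → ℝ be non-increasing, bounded, right-continuous, with lim_{ξ→+∞} μ(ξ) = 0, and let ν be the Lebesgue–Stieltjes measure of −μ, i.e. the Borel measure on ℝ with ν((s,t]) = μ(s) − μ(t) for all s ≤ t. Assume that ∫_ℝ |ζ|^q dν(ζ) < ∞ for every real q ≥ 1. Then for every p ≥ 1, every ε > 0 and every R > 0 there exist points ξ₊ > R and ξ₋ < −R at which μ is differentiable and such that ξ₊^p |μ'(ξ₊)| < ε and |ξ₋|^p |μ'(ξ₋)| < ε. -/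
/-!
Almost everywhere, `|μ'|` is the Radon–Nikodym density of `ν` with respect to Lebesgue measure,
so `∫ |ξ|^p |μ'(ξ)| dξ ≤ ∫ |ξ|^p dν < ∞`. A nonnegative function with finite integral over a
half-line, which has infinite Lebesgue measure, cannot be `≥ ε` almost everywhere on it; and `μ`,
being monotone, is differentiable almost everywhere.
-/

open MeasureTheory Set
open scoped ENNReal

theorem StieltjesFunction.lintegral_mul_ofReal_abs_deriv_le (f : StieltjesFunction ℝ)
    {w : ℝ → ℝ≥0∞} (hw : Measurable w) :
    ∫⁻ x, w x * ENNReal.ofReal |deriv f x| ≤ ∫⁻ x, w x ∂f.measure :=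
  calc ∫⁻ x, w x * ENNReal.ofReal |deriv f x|
      ≤ ∫⁻ x, f.measure.rnDeriv volume x * w x := by
        refine lintegral_mono_ae ?_
        filter_upwards [f.ae_hasDerivAt] with x hx
        rw [hx.deriv, abs_of_nonneg ENNReal.toReal_nonneg, mul_comm]
        exact mul_le_mul_left ENNReal.ofReal_toReal_le _
    _ = ∫⁻ x, w x ∂(volume.withDensity (f.measure.rnDeriv volume)) :=
        (lintegral_withDensity_eq_lintegral_mul _ (Measure.measurable_rnDeriv _ _) hw).symm
    _ ≤ ∫⁻ x, w x ∂f.measure := lintegral_mono' (Measure.withDensity_rnDeriv_le _ _) le_rfl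

theorem Antitone.ae_differentiableAt {f : ℝ → ℝ} (hf : Antitone f) :
    ∀ᵐ x, DifferentiableAt ℝ f x := by
  filter_upwards [hf.neg.ae_differentiableAt] with x hx
  simpa using hx.neg

theorem Antitone.lintegral_mul_ofReal_abs_deriv_le {f : ℝ → ℝ} (hf : Antitone f)
    (hrc : ∀ x, ContinuousWithinAt f (Ici x) x) {ν : Measure ℝ}
    (hν : ∀ s t, s ≤ t → ν (Ioc s t) = ENNReal.ofReal (f s - f t))
    {w : ℝ → ℝ≥0∞} (hw : Measurable w) :
    ∫⁻ x, w x * ENNReal.ofReal |deriv f x| ≤ ∫⁻ x, w x ∂ν := by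
  let g : StieltjesFunction ℝ := ⟨fun x => -f x, hf.neg, fun x => (hrc x).neg⟩
  have hgν : g.measure = ν := Measure.ext_of_Ioc _ _ fun s t hst => by
    rw [g.measure_Ioc, hν s t hst.le, neg_sub_neg]
  have hderiv (x : ℝ) : |deriv g x| = |deriv f x| := by
    rw [show ⇑g = -f from rfl, deriv.neg, abs_neg]
  simpa only [hgν, hderiv] using g.lintegral_mul_ofReal_abs_deriv_le hw

theorem exists_mem_lt_of_setLIntegral_ne_top {α : Type*} [MeasurableSpace α] {μ : Measure α}
    {s : Set α} (hs : MeasurableSet s) (hμs : μ s = ∞) {F : α → ℝ≥0∞}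
    (hF : ∫⁻ x in s, F x ∂μ ≠ ∞) {P : α → Prop} (hP : ∀ᵐ x ∂μ, P x) {ε : ℝ≥0∞} (hε : ε ≠ 0) :
    ∃ x ∈ s, P x ∧ F x < ε := by
  by_contra! hlarge
  refine hF (eq_top_iff.2 ?_)
  calc ∞ = ∫⁻ _ in s, ε ∂μ := by rw [setLIntegral_const, hμs, ENNReal.mul_top hε]
    _ ≤ ∫⁻ x in s, F x ∂μ := lintegral_mono_ae <| (ae_restrict_iff' hs).2 <|
        hP.mono fun x hx hxs => hlarge x hxs hx

theorem antitone_tail_weighted_deriv_small_at_infinity_general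
    (μ : ℝ → ℝ) (hμ : Antitone μ)
    (hrc : ∀ ξ, ContinuousWithinAt μ (Set.Ici ξ) ξ)
    (ν : Measure ℝ)
    (hν : ∀ s t : ℝ, s ≤ t → ν (Set.Ioc s t) = ENNReal.ofReal (μ s - μ t))
    (hmom : ∀ q : ℝ, 1 ≤ q → Integrable (fun ζ : ℝ => |ζ| ^ q) ν)
    (p ε R : ℝ) (hp : 1 ≤ p) (hε : 0 < ε) (hR : 0 < R) :
    (∃ ξp > R, DifferentiableAt ℝ μ ξp ∧ ξp ^ p * |deriv μ ξp| < ε) ∧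
    (∃ ξm < -R, DifferentiableAt ℝ μ ξm ∧ |ξm| ^ p * |deriv μ ξm| < ε) := by
  have hfinite : ∫⁻ x, ENNReal.ofReal (|x| ^ p * |deriv μ x|) ≠ ∞ := by
    refine ne_top_of_le_ne_top (hmom p hp).lintegral_lt_top.ne ?_
    calc _ = ∫⁻ x, ENNReal.ofReal (|x| ^ p) * ENNReal.ofReal |deriv μ x| :=
          lintegral_congr fun x => ENNReal.ofReal_mul (by positivity)
      _ ≤ _ := hμ.lintegral_mul_ofReal_abs_deriv_le hrc hν (by fun_prop)
  have small_in (s : Set ℝ) (hs : MeasurableSet s) (hvol : volume s = ∞) :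
      ∃ x ∈ s, DifferentiableAt ℝ μ x ∧ |x| ^ p * |deriv μ x| < ε := by
    obtain ⟨x, hxs, hdiff, hx⟩ := exists_mem_lt_of_setLIntegral_ne_top hs hvol
      (ne_top_of_le_ne_top hfinite (setLIntegral_le_lintegral s _)) hμ.ae_differentiableAt
      (ENNReal.ofReal_pos.2 hε).ne'
    exact ⟨x, hxs, hdiff, (ENNReal.ofReal_lt_ofReal_iff hε).1 hx⟩
  constructor
  · obtain ⟨x, hx, hdiff, hsmall⟩ := small_in (Ioi R) measurableSet_Ioi Real.volume_Ioi
    rw [abs_of_pos (hR.trans hx)] at hsmall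
    exact ⟨x, hx, hdiff, hsmall⟩
  · exact small_in (Iio (-R)) measurableSet_Iio Real.volume_Iio

/-- Weighted part of Lemma 3.3(i): if `μ` is non-increasing, bounded, right-continuous,
tends to `0` at `+∞`, and the Lebesgue–Stieltjes measure `ν` of `-μ` has finite moments of
all orders `q ≥ 1`, then beyond every threshold `R` (in both directions) there are
differentiability points of `μ` where `|ξ|^p |μ'(ξ)|` is smaller than any `ε > 0`. -/
theorem antitone_tail_weighted_deriv_small_at_infinity
    (μ : ℝ → ℝ) (hμ : Antitone μ) (M : ℝ) (hbdd : ∀ ξ, |μ ξ| ≤ M)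
    (hrc : ∀ ξ, ContinuousWithinAt μ (Set.Ici ξ) ξ)
    (hlim : Filter.Tendsto μ Filter.atTop (nhds 0))
    (ν : Measure ℝ)
    (hν : ∀ s t : ℝ, s ≤ t → ν (Set.Ioc s t) = ENNReal.ofReal (μ s - μ t))
    (hmom : ∀ q : ℝ, 1 ≤ q → Integrable (fun ζ : ℝ => |ζ| ^ q) ν)
    (p ε R : ℝ) (hp : 1 ≤ p) (hε : 0 < ε) (hR : 0 < R) :
    (∃ ξp > R, DifferentiableAt ℝ μ ξp ∧ ξp ^ p * |deriv μ ξp| < ε) ∧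
    (∃ ξm < -R, DifferentiableAt ℝ μ ξm ∧ |ξm| ^ p * |deriv μ ξm| < ε) :=
  antitone_tail_weighted_deriv_small_at_infinity_general μ hμ hrc ν hν hmom p ε R hp hε hR
end

section
/- Let μ : ℝ → ℝ be non-increasing, bounded and right-continuous, and let ν be the Lebesgue–Stieltjes measure of −μ, i.e. the Borel measure on ℝ with ν((s,t]) = μ(s) − μ(t) for all s ≤ t; assume moreover ∫_ℝ (1 + ζ²) dν(ζ) < ∞. Let ψ be a standard mollifier and ψ_δ(r) = δ^{-1}ψ(r/δ) for δ > 0. If μ is differentiable at a point b ∈ ℝ, then lim_{δ→0+} ∫_ℝ ψ_δ(b − ζ)(1 + ζ²) dν(ζ) = (1 + b²)·(−μ'(b)). -/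
open MeasureTheory Set Filter

private lemma moll_far_zero {f : ℝ → ℝ} (h0 : ∀ y : ℝ, 1 ≤ |y| → f y = 0)
    {x : ℝ} (hx : 1 < |x|) : deriv f x = 0 := by
  have hev : f =ᶠ[nhds x] (fun _ => (0:ℝ)) := by
    filter_upwards [Metric.ball_mem_nhds x (by linarith : (0:ℝ) < |x| - 1)] with y hy
    apply h0
    have hd : |x - y| < |x| - 1 := by
      simpa [Metric.mem_ball, Real.dist_eq, abs_sub_comm] using hy
    have := abs_sub_abs_le_abs_sub x y
    linarith
  rw [hev.deriv_eq]
  simp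

private lemma moll_integral_deriv_zero {f f' : ℝ → ℝ}
    (hd : ∀ x, HasDerivAt f (f' x) x) (hc : Continuous f')
    (h0 : ∀ x : ℝ, 1 ≤ |x| → f x = 0) (h0' : ∀ x : ℝ, 1 < |x| → f' x = 0) :
    ∫ x, f' x = 0 := by
  have hcs : HasCompactSupport f' := by
    apply HasCompactSupport.intro (isCompact_Icc (a := (-1:ℝ)) (b := 1))
    intro x hx
    exact h0' x (lt_of_not_ge fun hle => hx (by simpa [Set.mem_Icc] using abs_le.mp hle))
  have hint : Integrable f' := hc.integrable_of_hasCompactSupport hcs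
  have htend : Tendsto f atTop (nhds 0) := by
    apply Tendsto.congr' _ tendsto_const_nhds
    filter_upwards [eventually_ge_atTop (1:ℝ)] with x hx
    exact (h0 x (by rw [abs_of_pos (by linarith)]; exact hx)).symm
  have hIoi : ∫ x in Set.Ioi (-2:ℝ), f' x = 0 := by
    rw [integral_Ioi_of_hasDerivAt_of_tendsto (hd (-2)).continuousAt.continuousWithinAt
      (fun x _ => hd x) hint.integrableOn htend]
    rw [h0 (-2) (by norm_num)]
    ring
  have hIic : ∫ x in Set.Iic (-2:ℝ), f' x = 0 := by
    rw [setIntegral_congr_fun measurableSet_Iic (g := fun _ => (0:ℝ))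
      (fun x hx => h0' x (by
        rw [abs_of_neg (by simp only [Set.mem_Iic] at hx; linarith)]
        simp only [Set.mem_Iic] at hx; linarith))]
    simp
  rw [← intervalIntegral.integral_Iic_add_Ioi (b := (-2:ℝ)) hint.integrableOn hint.integrableOn,
    hIic, hIoi]
  ring

/-- Weighted part of Lemma 3.3(ii): if `ν` is the Lebesgue–Stieltjes measure of `-μ` for a
non-increasing, bounded, right-continuous `μ` with `∫ (1 + ζ²) dν < ∞`, and `ψ_δ` is a
standard mollifier, then at any differentiability point `b` of `μ` one has
`∫ ψ_δ(b - ζ)(1 + ζ²) dν(ζ) → (1 + b²)(-μ'(b))` as `δ → 0+`. -/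
theorem mollified_weighted_stieltjes_tendsto_neg_deriv
    (μ : ℝ → ℝ) (hμ : Antitone μ) (M : ℝ) (hbdd : ∀ ξ, |μ ξ| ≤ M)
    (hrc : ∀ ξ, ContinuousWithinAt μ (Set.Ici ξ) ξ)
    (ν : Measure ℝ)
    (hν : ∀ s t : ℝ, s ≤ t → ν (Set.Ioc s t) = ENNReal.ofReal (μ s - μ t))
    (hmom : Integrable (fun ζ : ℝ => 1 + ζ ^ 2) ν)
    (ψ : ℝ → ℝ) (hψ_nonneg : ∀ r, 0 ≤ ψ r) (hψ_even : ∀ r, ψ (-r) = ψ r)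
    (hψ_smooth : ContDiff ℝ (⊤ : ℕ∞) ψ) (hψ_supp : Function.support ψ ⊆ Set.Ioo (-1 : ℝ) 1)
    (hψ_int : ∫ r, ψ r = 1)
    (b : ℝ) (hdiff : DifferentiableAt ℝ μ b) :
    Filter.Tendsto (fun δ : ℝ => ∫ ζ, ψ ((b - ζ) / δ) / δ * (1 + ζ ^ 2) ∂ν)
      (nhdsWithin 0 (Set.Ioi 0)) (nhds ((1 + b ^ 2) * (-(deriv μ b)))) := by
  -- ψ facts
  have hψc : Continuous ψ := hψ_smooth.continuous
  have hψd : ∀ x, HasDerivAt ψ (deriv ψ x) x :=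
    fun x => (hψ_smooth.differentiable (by simp) x).hasDerivAt
  have hψ'c : Continuous (deriv ψ) := hψ_smooth.continuous_deriv (by simp)
  have hψ0 : ∀ x : ℝ, 1 ≤ |x| → ψ x = 0 := by
    intro x hx
    by_contra h
    have h2 := hψ_supp (Function.mem_support.mpr h)
    rw [Set.mem_Ioo] at h2
    have h3 : |x| < 1 := abs_lt.mpr h2
    linarith
  have hψ'0 : ∀ x : ℝ, 1 < |x| → deriv ψ x = 0 := fun x hx => moll_far_zero hψ0 hx
  have hψcs : HasCompactSupport ψ :=
    HasCompactSupport.intro (isCompact_Icc (a := (-1:ℝ)) (b := 1))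
      (fun x hx => Function.notMem_support.mp fun hs => hx (Set.Ioo_subset_Icc_self (hψ_supp hs)))
  have hψ'cs : HasCompactSupport (deriv ψ) := by
    apply HasCompactSupport.intro (isCompact_Icc (a := (-1:ℝ)) (b := 1))
    intro x hx
    exact hψ'0 x (lt_of_not_ge fun hle => hx (by simpa [Set.mem_Icc] using abs_le.mp hle))
  have hψint : Integrable ψ := hψc.integrable_of_hasCompactSupport hψcs
  have hψ'int : Integrable (deriv ψ) := hψ'c.integrable_of_hasCompactSupport hψ'cs
  obtain ⟨C0, hC0⟩ := hψc.bounded_above_of_compact_support hψcs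
  -- ∫ deriv ψ = 0
  have hψ'zero : ∫ s, deriv ψ s = 0 := moll_integral_deriv_zero hψd hψ'c hψ0 hψ'0
  -- ∫ s * deriv ψ s = -1
  have hsint : ∫ s, s * deriv ψ s = -1 := by
    have hd2 : ∀ x : ℝ, HasDerivAt (fun s => s * ψ s) (ψ x + x * deriv ψ x) x := by
      intro x
      exact ((hasDerivAt_id' x).mul (hψd x)).congr_deriv (by ring)
    have h0 : ∫ s, (ψ s + s * deriv ψ s) = 0 := by
      apply moll_integral_deriv_zero hd2 (hψc.add (continuous_id.mul hψ'c))
      · intro x hx; rw [hψ0 x hx]; ring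
      · intro x hx; rw [hψ0 x hx.le, hψ'0 x hx]; ring
    have hint2 : Integrable (fun s => s * deriv ψ s) :=
      (continuous_id.mul hψ'c).integrable_of_hasCompactSupport hψ'cs.mul_left
    rw [integral_add hψint hint2, hψ_int] at h0
    linarith
  -- ν is finite
  have hνfin : IsFiniteMeasure ν := by
    constructor
    have h1 : Integrable (fun _ : ℝ => (1:ℝ)) ν := by
      apply hmom.mono' aestronglyMeasurable_const
      refine Filter.Eventually.of_forall fun ζ => ?_
      rw [norm_one]
      nlinarith [sq_nonneg ζ]
    rcases integrable_const_iff.mp h1 with h | h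
    · norm_num at h
    · exact h.measure_univ_lt_top
  -- limit of μ at +∞
  have hbb : BddBelow (Set.range μ) := by
    refine ⟨-M, ?_⟩
    rintro y ⟨x, rfl⟩
    linarith [(abs_le.mp (hbdd x)).1]
  set L := ⨅ x, μ x with hLdef
  have hL : Tendsto μ atTop (nhds L) := tendsto_atTop_ciInf hμ hbb
  have hLle : ∀ t, L ≤ μ t := fun t => ciInf_le hbb t
  -- ν (Ioi t)
  have hIoi : ∀ t : ℝ, ν (Set.Ioi t) = ENNReal.ofReal (μ t - L) := by
    intro t
    have hmono : Monotone fun n : ℕ => Set.Ioc t (t + n) := by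
      intro n m hnm
      exact Set.Ioc_subset_Ioc_right (by exact_mod_cast add_le_add_right (Nat.cast_le.mpr hnm) t)
    have hU : (⋃ n : ℕ, Set.Ioc t (t + n)) = Set.Ioi t := by
      ext x
      simp only [Set.mem_iUnion, Set.mem_Ioc, Set.mem_Ioi]
      constructor
      · rintro ⟨n, h1, _⟩; exact h1
      · intro hx
        obtain ⟨n, hn⟩ := exists_nat_ge (x - t)
        exact ⟨n, hx, by linarith⟩
    have h1 : Tendsto (fun n : ℕ => ν (Set.Ioc t (t + n))) atTop (nhds (ν (Set.Ioi t))) := by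
      have := tendsto_measure_iUnion_atTop (μ := ν) hmono
      rwa [hU] at this
    have h2 : Tendsto (fun n : ℕ => ν (Set.Ioc t (t + n))) atTop
        (nhds (ENNReal.ofReal (μ t - L))) := by
      have hnat : Tendsto (fun n : ℕ => t + (n:ℝ)) atTop atTop :=
        tendsto_atTop_add_const_left _ t tendsto_natCast_atTop_atTop
      have h3 : Tendsto (fun n : ℕ => μ t - μ (t + n)) atTop (nhds (μ t - L)) :=
        tendsto_const_nhds.sub (hL.comp hnat)
      have h4 := (ENNReal.continuous_ofReal.tendsto _).comp h3
      apply h4.congr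
      intro n
      exact (hν t (t + n) (by linarith [Nat.cast_nonneg (α := ℝ) n])).symm
    exact tendsto_nhds_unique h1 h2
  have hG : ∀ t : ℝ, (ν (Set.Ioi t)).toReal = μ t - L := by
    intro t
    rw [hIoi t, ENNReal.toReal_ofReal (sub_nonneg.mpr (hLle t))]
  have hμm : Measurable μ := hμ.measurable
  -- Key representation of the unweighted mollified integral
  have key : ∀ δ : ℝ, 0 < δ →
      (∫ ζ, ψ ((b - ζ) / δ) / δ ∂ν) = -∫ s, deriv ψ s * ((μ (b - δ * s) - L) / δ) := by
    intro δ hδ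
    set D : ℝ → ℝ := fun r => deriv ψ (r / δ) / δ / δ with hD
    have hDc : Continuous D :=
      ((hψ'c.comp (continuous_id.div_const δ)).div_const δ).div_const δ
    have hDcs : HasCompactSupport D := by
      apply HasCompactSupport.intro (isCompact_Icc (a := -δ) (b := δ))
      intro x hx
      have h1 : (1:ℝ) < |x / δ| := by
        rw [abs_div, abs_of_pos hδ, lt_div_iff₀ hδ, one_mul]
        simp only [Set.mem_Icc, not_and_or, not_le] at hx
        rcases hx with h | h
        · rw [abs_of_neg (by linarith)]; linarith
        · rw [abs_of_pos (by linarith)]; linarith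
      simp [hD, hψ'0 _ h1]
    have hDint : Integrable D := hDc.integrable_of_hasCompactSupport hDcs
    have hDd : ∀ x : ℝ, HasDerivAt (fun r => ψ (r / δ) / δ) (D x) x := by
      intro x
      have h1 : HasDerivAt (fun r : ℝ => ψ (r / δ)) (deriv ψ (x / δ) * (1 / δ)) x :=
        HasDerivAt.comp x (hψd (x / δ)) ((hasDerivAt_id x).div_const δ)
      exact (h1.div_const δ).congr_deriv (show deriv ψ (x / δ) * (1 / δ) / δ = deriv ψ (x / δ) / δ / δ by ring)
    have htend0 : Tendsto (fun r : ℝ => ψ (r / δ) / δ) atTop (nhds 0) := by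
      apply Tendsto.congr' _ tendsto_const_nhds
      filter_upwards [eventually_ge_atTop δ] with r hr
      rw [hψ0 (r / δ) (by
        rw [abs_of_nonneg (div_nonneg (le_trans hδ.le hr) hδ.le)]
        exact (one_le_div hδ).mpr hr)]
      simp
    have hfun : ∀ ζ : ℝ, ψ ((b - ζ) / δ) / δ = -∫ r in Set.Ioi (b - ζ), D r := by
      intro ζ
      rw [integral_Ioi_of_hasDerivAt_of_tendsto (hDd (b - ζ)).continuousAt.continuousWithinAt
        (fun x _ => hDd x) hDint.integrableOn htend0]
      ring
    have hmeas : StronglyMeasurable (Function.uncurry fun ζ r =>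
        (Set.Ioi (b - ζ)).indicator D r) := by
      have heq : (Function.uncurry fun ζ r => (Set.Ioi (b - ζ)).indicator D r)
          = Set.indicator {q : ℝ × ℝ | b < q.1 + q.2} (fun q => D q.2) := by
        funext p
        simp only [Function.uncurry, Set.indicator_apply, Set.mem_Ioi, Set.mem_setOf_eq]
        exact if_congr (by constructor <;> intro h <;> linarith) rfl rfl
      rw [heq]
      exact (hDc.comp continuous_snd).stronglyMeasurable.indicator
        ((isOpen_lt continuous_const (continuous_fst.add continuous_snd)).measurableSet)
    have hintf : Integrable (Function.uncurry fun ζ r => (Set.Ioi (b - ζ)).indicator D r)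
        (ν.prod volume) := by
      rw [integrable_prod_iff hmeas.aestronglyMeasurable]
      refine ⟨Filter.Eventually.of_forall fun ζ => ?_, ?_⟩
      · exact hDint.indicator (measurableSet_Ioi (a := b - ζ))
      apply Integrable.mono' (integrable_const (∫ r, ‖D r‖))
        hmeas.aestronglyMeasurable.norm.integral_prod_right'
      refine Filter.Eventually.of_forall fun ζ => ?_
      rw [Real.norm_of_nonneg (integral_nonneg fun r => norm_nonneg _)]
      simp only [Function.uncurry_apply_pair]
      apply integral_mono ((hDint.indicator (measurableSet_Ioi (a := b - ζ))).norm) hDint.norm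
      intro r
      exact norm_indicator_le_norm_self (s := Set.Ioi (b - ζ)) (f := D) (a := r)
    have hswap : (∫ ζ, (∫ r, (Set.Ioi (b - ζ)).indicator D r) ∂ν)
        = ∫ r, (∫ ζ, (Set.Ioi (b - ζ)).indicator D r ∂ν) := by
      simpa only [Function.uncurry_apply_pair] using integral_integral_swap hintf
    have step1 : (∫ ζ, ψ ((b - ζ) / δ) / δ ∂ν)
        = -∫ ζ, (∫ r, (Set.Ioi (b - ζ)).indicator D r) ∂ν := by
      have he : (fun ζ : ℝ => ψ ((b - ζ) / δ) / δ)
          = fun ζ => -∫ r, (Set.Ioi (b - ζ)).indicator D r := by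
        funext ζ
        rw [hfun ζ, integral_indicator measurableSet_Ioi]
      rw [he, integral_neg]
    have hinner : ∀ r : ℝ, (∫ ζ, (Set.Ioi (b - ζ)).indicator D r ∂ν)
        = (μ (b - r) - L) * D r := by
      intro r
      have he : (fun ζ => (Set.Ioi (b - ζ)).indicator D r)
          = fun ζ => (Set.Ioi (b - r)).indicator (fun _ => D r) ζ := by
        funext ζ
        simp only [Set.indicator_apply, Set.mem_Ioi]
        exact if_congr (by constructor <;> intro h <;> linarith) rfl rfl
      rw [he, integral_indicator_const (D r) measurableSet_Ioi, smul_eq_mul, measureReal_def, hG (b - r)]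
    have hinner' : (∫ r, (∫ ζ, (Set.Ioi (b - ζ)).indicator D r ∂ν))
        = ∫ r, (μ (b - r) - L) * D r :=
      integral_congr_ae (Filter.Eventually.of_forall hinner)
    rw [step1, hswap, hinner', neg_inj]
    have h2 : (∫ x, (μ (b - δ * x) - L) * D (δ * x))
        = δ⁻¹ * ∫ r, (μ (b - r) - L) * D r := by
      simpa [abs_of_pos (inv_pos.mpr hδ), smul_eq_mul] using
        MeasureTheory.Measure.integral_comp_mul_left (fun r => (μ (b - r) - L) * D r) δ
    have h3 : (∫ r, (μ (b - r) - L) * D r)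
        = δ * ∫ x, (μ (b - δ * x) - L) * D (δ * x) := by
      rw [h2, ← mul_assoc, mul_inv_cancel₀ hδ.ne', one_mul]
    rw [h3, ← integral_const_mul]
    refine integral_congr_ae (Filter.Eventually.of_forall fun s => ?_)
    have hs : δ * s / δ = s := mul_div_cancel_left₀ s hδ.ne'
    simp only [hD, hs]
    field_simp
  -- integrability of the difference-quotient integrand
  have h1int : ∀ δ : ℝ, 0 < δ →
      Integrable (fun s => deriv ψ s * ((μ (b - δ * s) - μ b) / δ)) := by
    intro δ hδ
    refine Integrable.mono' ((hψ'int.norm).const_mul (2 * M / δ)) ?_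
      (Filter.Eventually.of_forall fun s => ?_)
    · exact (hψ'c.measurable.mul (((hμm.comp (measurable_const.sub
        (measurable_id.const_mul δ))).sub measurable_const).div_const δ)).aestronglyMeasurable
    · have hx := abs_le.mp (hbdd (b - δ * s))
      have hb' := abs_le.mp (hbdd b)
      have habs : |μ (b - δ * s) - μ b| ≤ 2 * M := abs_le.mpr ⟨by linarith, by linarith⟩
      rw [norm_mul]
      calc ‖deriv ψ s‖ * ‖(μ (b - δ * s) - μ b) / δ‖
          ≤ ‖deriv ψ s‖ * (2 * M / δ) := by
            apply mul_le_mul_of_nonneg_left _ (norm_nonneg _)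
            rw [Real.norm_eq_abs, abs_div, abs_of_pos hδ]
            exact (div_le_div_iff_of_pos_right hδ).mpr habs
        _ = 2 * M / δ * ‖deriv ψ s‖ := by ring
  -- constant removal
  have key2 : ∀ δ : ℝ, 0 < δ →
      (∫ ζ, ψ ((b - ζ) / δ) / δ ∂ν)
        = -∫ s, deriv ψ s * ((μ (b - δ * s) - μ b) / δ) := by
    intro δ hδ
    rw [key δ hδ, neg_inj]
    have hsplit : (fun s => deriv ψ s * ((μ (b - δ * s) - L) / δ))
        = fun s => deriv ψ s * ((μ (b - δ * s) - μ b) / δ) + deriv ψ s * ((μ b - L) / δ) := by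
      funext s; ring
    rw [hsplit, integral_add (h1int δ hδ) (hψ'int.mul_const _), integral_mul_const, hψ'zero,
      zero_mul, add_zero]
  -- convergence of the unweighted integral
  have hA : Tendsto (fun δ : ℝ => ∫ ζ, ψ ((b - ζ) / δ) / δ ∂ν)
      (nhdsWithin 0 (Set.Ioi 0)) (nhds (-(deriv μ b))) := by
    have hT : HasDerivAt μ (deriv μ b) b := hdiff.hasDerivAt
    have hlo := hasDerivAt_iff_isLittleO.mp hT
    set T := deriv μ b with hTdef
    set C := ∫ s, ‖deriv ψ s‖ with hCdef
    have hCnn : 0 ≤ C := integral_nonneg fun s => norm_nonneg _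
    rw [Metric.tendsto_nhdsWithin_nhds]
    intro ε hε
    have hε' : 0 < ε / (C + 1) := by positivity
    obtain ⟨η, hη, hbound⟩ := Metric.eventually_nhds_iff.mp (hlo.def hε')
    refine ⟨η, hη, ?_⟩
    intro δ hδmem hδd
    have hδ : (0:ℝ) < δ := hδmem
    have hδη : δ < η := by rwa [Real.dist_eq, sub_zero, abs_of_pos hδ] at hδd
    rw [key2 δ hδ, Real.dist_eq]
    have hTrep : T = -∫ s, deriv ψ s * (s * T) := by
      have he : (fun s => deriv ψ s * (s * T)) = fun s => s * deriv ψ s * T := by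
        funext s; ring
      rw [he, integral_mul_const, hsint]
      ring
    have hf2int : Integrable (fun s => deriv ψ s * (s * T)) := by
      have he : (fun s => deriv ψ s * (s * T)) = fun s => s * deriv ψ s * T := by
        funext s; ring
      rw [he]
      exact ((continuous_id.mul hψ'c).integrable_of_hasCompactSupport hψ'cs.mul_left).mul_const T
    have heq : (-∫ s, deriv ψ s * ((μ (b - δ * s) - μ b) / δ)) - -T
        = -∫ s, (deriv ψ s * ((μ (b - δ * s) - μ b) / δ) + deriv ψ s * (s * T)) := by
      rw [integral_add (h1int δ hδ) hf2int]
      linarith [hTrep]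
    rw [heq, abs_neg]
    have hb2 : ∀ s : ℝ, |deriv ψ s * ((μ (b - δ * s) - μ b) / δ) + deriv ψ s * (s * T)|
        ≤ ε / (C + 1) * ‖deriv ψ s‖ := by
      intro s
      rcases eq_or_ne (deriv ψ s) 0 with h | h
      · simp [h]
      · have hs1 : |s| ≤ 1 := by
          by_contra hs
          push_neg at hs
          exact h (hψ'0 s hs)
        have hdist : dist (b - δ * s) b < η := by
          rw [Real.dist_eq, show b - δ * s - b = -(δ * s) by ring, abs_neg, abs_mul,
            abs_of_pos hδ]
          nlinarith [mul_nonneg hδ.le (sub_nonneg.mpr hs1)]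
        have hb3 := hbound hdist
        rw [show b - δ * s - b = -(δ * s) by ring, Real.norm_eq_abs, Real.norm_eq_abs,
          smul_eq_mul, abs_neg, abs_mul, abs_of_pos hδ] at hb3
        -- hb3 : |μ (b - δ*s) - μ b - -(δ*s) * T| ≤ ε/(C+1) * (δ * |s|)
        have hq : |(μ (b - δ * s) - μ b) / δ + s * T| ≤ ε / (C + 1) := by
          have he2 : (μ (b - δ * s) - μ b) / δ + s * T
              = (μ (b - δ * s) - μ b - -(δ * s) * T) / δ := by
            field_simp
            ring
          rw [he2, abs_div, abs_of_pos hδ, div_le_iff₀ hδ]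
          calc |μ (b - δ * s) - μ b - -(δ * s) * T| ≤ ε / (C + 1) * (δ * |s|) := hb3
            _ ≤ ε / (C + 1) * δ := by
                nlinarith [mul_nonneg (mul_nonneg hε'.le hδ.le) (sub_nonneg.mpr hs1),
                  abs_nonneg s]
        calc |deriv ψ s * ((μ (b - δ * s) - μ b) / δ) + deriv ψ s * (s * T)|
            = |deriv ψ s| * |(μ (b - δ * s) - μ b) / δ + s * T| := by
              rw [← abs_mul]; ring_nf
          _ ≤ |deriv ψ s| * (ε / (C + 1)) := mul_le_mul_of_nonneg_left hq (abs_nonneg _)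
          _ = ε / (C + 1) * ‖deriv ψ s‖ := by rw [Real.norm_eq_abs]; ring
    have hintsum := (h1int δ hδ).add hf2int
    have hle : |∫ s, (deriv ψ s * ((μ (b - δ * s) - μ b) / δ) + deriv ψ s * (s * T))|
        ≤ ε / (C + 1) * C := by
      calc |∫ s, (deriv ψ s * ((μ (b - δ * s) - μ b) / δ) + deriv ψ s * (s * T))|
          ≤ ∫ s, |deriv ψ s * ((μ (b - δ * s) - μ b) / δ) + deriv ψ s * (s * T)| := by
            simpa only [Real.norm_eq_abs] using norm_integral_le_integral_norm
              (fun s => deriv ψ s * ((μ (b - δ * s) - μ b) / δ) + deriv ψ s * (s * T))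
        _ ≤ ∫ s, ε / (C + 1) * ‖deriv ψ s‖ := by
            apply integral_mono hintsum.abs ((hψ'int.norm).const_mul _)
            intro s
            exact hb2 s
        _ = ε / (C + 1) * C := by rw [integral_const_mul]
    calc |∫ s, (deriv ψ s * ((μ (b - δ * s) - μ b) / δ) + deriv ψ s * (s * T))|
        ≤ ε / (C + 1) * C := hle
      _ < ε := by
          rw [div_mul_eq_mul_div, div_lt_iff₀ (by positivity)]
          nlinarith
  -- integrability of weighted integrands
  have hI2 : ∀ δ : ℝ, 0 < δ → Integrable (fun ζ => ψ ((b - ζ) / δ) / δ) ν := by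
    intro δ hδ
    refine Integrable.mono' (integrable_const (C0 / δ)) ?_
      (Filter.Eventually.of_forall fun ζ => ?_)
    · exact ((hψc.comp ((continuous_const.sub continuous_id).div_const δ)).div_const
        δ).aestronglyMeasurable
    · rw [Real.norm_of_nonneg (div_nonneg (hψ_nonneg _) hδ.le)]
      have := hC0 ((b - ζ) / δ)
      rw [Real.norm_eq_abs, abs_of_nonneg (hψ_nonneg _)] at this
      exact (div_le_div_iff_of_pos_right hδ).mpr this
  have hI1 : ∀ δ : ℝ, 0 < δ → Integrable (fun ζ => ψ ((b - ζ) / δ) / δ * (1 + ζ ^ 2)) ν := by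
    intro δ hδ
    refine Integrable.mono' (hmom.const_mul (C0 / δ)) ?_
      (Filter.Eventually.of_forall fun ζ => ?_)
    · exact (((hψc.comp ((continuous_const.sub continuous_id).div_const δ)).div_const δ).mul
        (continuous_const.add (continuous_pow 2))).aestronglyMeasurable
    · have h1 : (0:ℝ) ≤ 1 + ζ ^ 2 := by positivity
      rw [Real.norm_of_nonneg (mul_nonneg (div_nonneg (hψ_nonneg _) hδ.le) h1)]
      have h2 := hC0 ((b - ζ) / δ)
      rw [Real.norm_eq_abs, abs_of_nonneg (hψ_nonneg _)] at h2
      have h3 : ψ ((b - ζ) / δ) / δ ≤ C0 / δ := (div_le_div_iff_of_pos_right hδ).mpr h2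
      exact mul_le_mul_of_nonneg_right h3 h1
  -- the weighted error term tends to zero
  have hE0 : Tendsto (fun δ : ℝ => (∫ ζ, ψ ((b - ζ) / δ) / δ * (1 + ζ ^ 2) ∂ν)
      - (1 + b ^ 2) * ∫ ζ, ψ ((b - ζ) / δ) / δ ∂ν) (nhdsWithin 0 (Set.Ioi 0)) (nhds 0) := by
    apply squeeze_zero_norm'
      (a := fun δ => δ * (2 * |b| + δ) * ∫ ζ, ψ ((b - ζ) / δ) / δ ∂ν)
    · filter_upwards [self_mem_nhdsWithin] with δ hδmem
      have hδ : (0:ℝ) < δ := hδmem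
      have hint3 : Integrable (fun ζ => ψ ((b - ζ) / δ) / δ * (ζ ^ 2 - b ^ 2)) ν := by
        apply ((hI1 δ hδ).sub ((hI2 δ hδ).const_mul (1 + b ^ 2))).congr
        exact Filter.Eventually.of_forall fun ζ => by simp only [Pi.sub_apply]; ring
      have e1 : (∫ ζ, ψ ((b - ζ) / δ) / δ * (1 + ζ ^ 2) ∂ν)
          - (1 + b ^ 2) * ∫ ζ, ψ ((b - ζ) / δ) / δ ∂ν
          = ∫ ζ, ψ ((b - ζ) / δ) / δ * (ζ ^ 2 - b ^ 2) ∂ν := by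
        rw [← integral_const_mul, ← integral_sub (hI1 δ hδ) ((hI2 δ hδ).const_mul (1 + b ^ 2))]
        exact integral_congr_ae (Filter.Eventually.of_forall fun ζ => by ring)
      rw [e1]
      have hpt : ∀ ζ : ℝ, ‖ψ ((b - ζ) / δ) / δ * (ζ ^ 2 - b ^ 2)‖
          ≤ ψ ((b - ζ) / δ) / δ * (δ * (2 * |b| + δ)) := by
        intro ζ
        rcases eq_or_ne (ψ ((b - ζ) / δ)) 0 with h | h
        · simp [h]
        · have hζ : |(b - ζ) / δ| < 1 := by
            have h4 := hψ_supp (Function.mem_support.mpr h)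
            rw [Set.mem_Ioo] at h4
            exact abs_lt.mpr h4
          have hbζ : |b - ζ| < δ := by
            rwa [abs_div, abs_of_pos hδ, div_lt_one hδ] at hζ
          have h2 : |ζ ^ 2 - b ^ 2| ≤ δ * (2 * |b| + δ) := by
            rw [show ζ ^ 2 - b ^ 2 = (ζ - b) * (ζ + b) by ring, abs_mul]
            have e2 : |ζ - b| ≤ δ := by rw [abs_sub_comm]; exact hbζ.le
            have e3 : |ζ + b| ≤ 2 * |b| + δ := by
              calc |ζ + b| = |(ζ - b) + 2 * b| := by ring_nf
                _ ≤ |ζ - b| + |2 * b| := abs_add_le _ _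
                _ ≤ 2 * |b| + δ := by
                    rw [abs_mul, abs_two]
                    linarith
            exact mul_le_mul e2 e3 (abs_nonneg _) hδ.le
          rw [norm_mul, Real.norm_eq_abs, Real.norm_eq_abs, abs_div, abs_of_pos hδ,
            abs_of_nonneg (hψ_nonneg _)]
          exact mul_le_mul_of_nonneg_left h2 (div_nonneg (hψ_nonneg _) hδ.le)
      calc ‖∫ ζ, ψ ((b - ζ) / δ) / δ * (ζ ^ 2 - b ^ 2) ∂ν‖
          ≤ ∫ ζ, ‖ψ ((b - ζ) / δ) / δ * (ζ ^ 2 - b ^ 2)‖ ∂ν := norm_integral_le_integral_norm _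
        _ ≤ ∫ ζ, ψ ((b - ζ) / δ) / δ * (δ * (2 * |b| + δ)) ∂ν := by
            apply integral_mono hint3.norm ((hI2 δ hδ).mul_const _)
            intro ζ
            exact hpt ζ
        _ = δ * (2 * |b| + δ) * ∫ ζ, ψ ((b - ζ) / δ) / δ ∂ν := by
            rw [integral_mul_const]
            ring
    · have h1 : Tendsto (fun δ : ℝ => δ) (nhdsWithin 0 (Set.Ioi 0)) (nhds 0) :=
        tendsto_id.mono_right nhdsWithin_le_nhds
      have h2 : Tendsto (fun δ : ℝ => δ * (2 * |b| + δ) * ∫ ζ, ψ ((b - ζ) / δ) / δ ∂ν)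
          (nhdsWithin 0 (Set.Ioi 0)) (nhds (0 * (2 * |b| + 0) * -deriv μ b)) :=
        (h1.mul (tendsto_const_nhds.add h1)).mul hA
      simpa using h2
  -- final assembly
  have hfin : (fun δ : ℝ => ∫ ζ, ψ ((b - ζ) / δ) / δ * (1 + ζ ^ 2) ∂ν)
      = fun δ => (1 + b ^ 2) * (∫ ζ, ψ ((b - ζ) / δ) / δ ∂ν)
        + ((∫ ζ, ψ ((b - ζ) / δ) / δ * (1 + ζ ^ 2) ∂ν)
          - (1 + b ^ 2) * ∫ ζ, ψ ((b - ζ) / δ) / δ ∂ν) := by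
    funext δ
    ring
  rw [hfin]
  have hfinal : Tendsto (fun δ : ℝ => (1 + b ^ 2) * (∫ ζ, ψ ((b - ζ) / δ) / δ ∂ν)
      + ((∫ ζ, ψ ((b - ζ) / δ) / δ * (1 + ζ ^ 2) ∂ν)
        - (1 + b ^ 2) * ∫ ζ, ψ ((b - ζ) / δ) / δ ∂ν))
      (nhdsWithin 0 (Set.Ioi 0)) (nhds ((1 + b ^ 2) * -deriv μ b + 0)) :=
    (tendsto_const_nhds.mul hA).add hE0
  simpa using hfinal
end

section
/- Let N > 0 and let a : [−N, N] → ℝ be continuous; set M_N = max_{|ξ| ≤ N} |a(ξ)|. Let u₁, u₂ ∈ ℝ with |u₁| < N and |u₂| < N, and let M_b ≥ max{|a(ξ)| : |ξ| ≤ max(|u₁|, |u₂|)}. Let f̄₁ : [−N, N] → [0, 1] and f̄₂ : [−N, N] → [−1, 0] be non-increasing functions, and define m̄₁(ξ) = M_N·max(u₁ − ξ, 0) − ∫_ξ^N (−a(η)) f̄₁(η) dη and m̄₂(ξ) = ∫_{−N}^ξ (−a(η)) f̄₂(η) dη + M_N·max(ξ − u₂, 0). Assume m̄₁(ξ) ≥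 0 and m̄₂(ξ) ≥ 0 for all ξ ∈ [−N, N]. Then −∫_{−N}^N (−a(ξ)) f̄₁(ξ) f̄₂(ξ) dξ ≤ M_b·max(u₁ − u₂, 0). -/
/-!
Write the left-hand side as `∫_{-N}^N f̄₁ · (-f̄₂) · (-a)`. Beyond `u₁` the condition `m̄₁ ≥ 0`
says that every right tail of `(-a) f̄₁` is nonpositive, and below `min u₁ u₂` the condition
`m̄₂ ≥ 0` says that every left head of `a f̄₂` is nonpositive. Multiplying by a nonnegative
monotone weight (`-f̄₂`, resp. the antitone `f̄₁`) preserves this sign — a second mean value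
argument, obtained from the layer cake formula and Fubini. Only the window `[min u₁ u₂, u₁]`,
of length `(u₁ - u₂)⁺`, remains, and there the integrand is bounded by `M_b`.
-/

open MeasureTheory intervalIntegral Set

theorem IsUpperSet.exists_Ioc_inter_ae_eq_Ioc {S : Set ℝ} (hS : IsUpperSet S) {c d : ℝ}
    (hcd : c ≤ d) : ∃ t ∈ Icc c d, (Ioc c d ∩ S : Set ℝ) =ᵐ[volume] Ioc t d := by
  set T := insert d (S ∩ Icc c d)
  have hT_bdd : BddBelow T := ⟨c, by rintro x (rfl | ⟨-, hx⟩); exacts [hcd, hx.1]⟩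
  have hT_ne : T.Nonempty := insert_nonempty _ _
  have hct : c ≤ sInf T := le_csInf hT_ne (by rintro x (rfl | ⟨-, hx⟩); exacts [hcd, hx.1])
  refine ⟨sInf T, ⟨hct, csInf_le hT_bdd (mem_insert _ _)⟩, ?_⟩
  have hsub : Ioc (sInf T) d ⊆ Ioc c d ∩ S := by
    intro x hx
    obtain ⟨y, hyT, hyx⟩ := exists_lt_of_csInf_lt hT_ne hx.1
    rcases hyT with rfl | ⟨hyS, -⟩
    · exact absurd hx.2 hyx.not_ge
    · exact ⟨⟨hct.trans_lt hx.1, hx.2⟩, hS hyx.le hyS⟩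
  have hsup : Ioc c d ∩ S ⊆ Icc (sInf T) d := fun x hx =>
    ⟨csInf_le hT_bdd (Or.inr ⟨hx.2, Ioc_subset_Icc_self hx.1⟩), hx.1.2⟩
  exact (hsup.eventuallyLE.trans Ioc_ae_eq_Icc.symm.le).antisymm hsub.eventuallyLE

theorem setIntegral_indicator_nonpos_of_isUpperSet {S : Set ℝ} (hS : IsUpperSet S) {c d : ℝ}
    (hcd : c ≤ d) {h : ℝ → ℝ} (hH : ∀ ξ ∈ Icc c d, ∫ t in ξ..d, h t ≤ 0) :
    ∫ x in Ioc c d, S.indicator h x ≤ 0 := by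
  obtain ⟨t, ht, hae⟩ := hS.exists_Ioc_inter_ae_eq_Ioc hcd
  rw [setIntegral_indicator hS.ordConnected.measurableSet, setIntegral_congr_set hae,
    ← integral_of_le ht.2]
  exact hH t ht

theorem setIntegral_Ioc_indicator_Iio_const {y M : ℝ} (hy : 0 ≤ y) (hyM : y ≤ M) (b : ℝ) :
    ∫ s in Ioc 0 M, (Iio y).indicator (fun _ => b) s = y * b := by
  have hI : Ioc 0 M ∩ Iio y = Ioo 0 y := by
    ext s
    simp only [mem_inter_iff, mem_Ioc, mem_Iio, mem_Ioo]
    grind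
  rw [setIntegral_indicator measurableSet_Iio, setIntegral_const, hI,
    Real.volume_real_Ioo_of_le hy, sub_zero, smul_eq_mul]

/-- Layer cake: `φ x = ∫_0^{φ d} 1_{s < φ x} ds`, and each level set `{s < φ}` is an upper set. -/
theorem integral_mul_nonpos_of_monotone {c d : ℝ} (hcd : c ≤ d) {φ h : ℝ → ℝ}
    (hφ : Monotone φ) (hφ0 : ∀ x, 0 ≤ φ x) (hh : IntervalIntegrable h volume c d)
    (hH : ∀ ξ ∈ Icc c d, ∫ t in ξ..d, h t ≤ 0) :
    ∫ t in c..d, φ t * h t ≤ 0 := by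
  set μ := volume.restrict (Ioc c d)
  set ν := volume.restrict (Ioc 0 (φ d))
  set F : ℝ → ℝ → ℝ := fun x s => {x | s < φ x}.indicator h x
  have hF : Integrable (Function.uncurry F) (μ.prod ν) :=
    ((hh.1.comp_fst ν).indicator
      (measurableSet_lt measurable_snd (hφ.measurable.comp measurable_fst)) :)
  have layer_cake : ∀ x ∈ Ioc c d, ∫ s, F x s ∂ν = φ x * h x := fun x hx => by
    rw [← setIntegral_Ioc_indicator_Iio_const (hφ0 x) (hφ hx.2) (h x)]
    rfl
  calc ∫ t in c..d, φ t * h t = ∫ x, ∫ s, F x s ∂ν ∂μ := by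
        rw [integral_of_le hcd]
        exact setIntegral_congr_fun measurableSet_Ioc fun x hx => (layer_cake x hx).symm
    _ = ∫ s, ∫ x, F x s ∂μ ∂ν := integral_integral_swap hF
    _ ≤ 0 := integral_nonpos fun s =>
        setIntegral_indicator_nonpos_of_isUpperSet (fun x y hxy hx => hx.trans_le (hφ hxy)) hcd hH

theorem integral_mul_nonpos_of_monotoneOn {c d : ℝ} (hcd : c ≤ d) {φ h : ℝ → ℝ}
    (hφ : MonotoneOn φ (Icc c d)) (hφ0 : ∀ x ∈ Icc c d, 0 ≤ φ x)
    (hh : IntervalIntegrable h volume c d) (hH : ∀ ξ ∈ Icc c d, ∫ t in ξ..d, h t ≤ 0) :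
    ∫ t in c..d, φ t * h t ≤ 0 := by
  set φ' := fun x => φ (projIcc c d hcd x)
  have hφ' : Monotone φ' := fun x y hxy =>
    hφ (projIcc c d hcd x).2 (projIcc c d hcd y).2 (monotone_projIcc hcd hxy)
  calc ∫ t in c..d, φ t * h t = ∫ t in c..d, φ' t * h t :=
        integral_congr fun x hx => by
          rw [uIcc_of_le hcd] at hx
          simp only [φ', projIcc_of_mem hcd hx]
    _ ≤ 0 := integral_mul_nonpos_of_monotone hcd hφ' (fun x => hφ0 _ (projIcc c d hcd x).2) hh hH

theorem integral_mul_nonpos_of_antitoneOn {c d : ℝ} (hcd : c ≤ d) {ψ h : ℝ → ℝ}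
    (hψ : AntitoneOn ψ (Icc c d)) (hψ0 : ∀ x ∈ Icc c d, 0 ≤ ψ x)
    (hh : IntervalIntegrable h volume c d) (hH : ∀ ξ ∈ Icc c d, ∫ t in c..ξ, h t ≤ 0) :
    ∫ t in c..d, ψ t * h t ≤ 0 := by
  have hneg : ∀ {x}, x ∈ Icc (-d) (-c) → -x ∈ Icc c d := fun hx =>
    ⟨le_neg_of_le_neg hx.2, neg_le.mp hx.1⟩
  have := integral_mul_nonpos_of_monotoneOn (φ := fun t => ψ (-t)) (h := fun t => h (-t))
    (neg_le_neg hcd) (fun x hx y hy hxy => hψ (hneg hy) (hneg hx) (neg_le_neg hxy))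
    (fun x hx => hψ0 _ (hneg hx)) ((IntervalIntegrable.iff_comp_neg).mp hh).symm
    (fun ξ hξ => by simpa using hH (-ξ) (hneg hξ))
  rwa [integral_comp_neg (fun t => ψ t * h t), neg_neg, neg_neg] at this
theorem intervalIntegral.integral_le_of_nonpos_off_Ioc {f : ℝ → ℝ} {c p q d C : ℝ}
    (hcp : c ≤ p) (hpq : p ≤ q) (hqd : q ≤ d) (hf : IntegrableOn f (Icc c d))
    (hleft : ∫ x in c..p, f x ≤ 0) (hright : ∫ x in q..d, f x ≤ 0)
    (hC : ∀ x ∈ Ioc p q, ‖f x‖ ≤ C) :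
    ∫ x in c..d, f x ≤ C * (q - p) := by
  have hII : ∀ {x y}, c ≤ x → x ≤ y → y ≤ d → IntervalIntegrable f volume x y :=
    fun hx hxy hy =>
      (intervalIntegrable_iff_integrableOn_Icc_of_le hxy).2 (hf.mono_set (Icc_subset_Icc hx hy))
  have hmiddle : ∫ x in p..q, f x ≤ C * (q - p) := calc
    ∫ x in p..q, f x ≤ ‖∫ x in p..q, f x‖ := Real.le_norm_self _
    _ ≤ C * |q - p| := norm_integral_le_of_norm_le_const (uIoc_of_le hpq ▸ hC)
    _ = C * (q - p) := by rw [abs_of_nonneg (sub_nonneg.mpr hpq)]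
  rw [← integral_add_adjacent_intervals (hII le_rfl hcp (hpq.trans hqd))
      (hII hcp (hpq.trans hqd) le_rfl),
    ← integral_add_adjacent_intervals (hII hcp hpq hqd) (hII (hcp.trans hpq) hqd le_rfl)]
  linarith

theorem boundary_defect_estimate_general
    (N : ℝ) (a : ℝ → ℝ) (ha : ContinuousOn a (Set.Icc (-N) N))
    (MN : ℝ)
    (u₁ u₂ : ℝ) (hu₁ : |u₁| < N) (hu₂ : |u₂| < N)
    (Mb : ℝ) (hMb : ∀ ξ : ℝ, |ξ| ≤ max |u₁| |u₂| → |a ξ| ≤ Mb)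
    (f₁ f₂ : ℝ → ℝ)
    (hf₁_mem : ∀ ξ ∈ Set.Icc (-N) N, f₁ ξ ∈ Set.Icc (0 : ℝ) 1)
    (hf₂_mem : ∀ ξ ∈ Set.Icc (-N) N, f₂ ξ ∈ Set.Icc (-1 : ℝ) 0)
    (hf₁_anti : AntitoneOn f₁ (Set.Icc (-N) N))
    (hf₂_anti : AntitoneOn f₂ (Set.Icc (-N) N))
    (hm₁ : ∀ ξ ∈ Set.Icc (-N) N,
      0 ≤ MN * max (u₁ - ξ) 0 - ∫ η in ξ..N, (-(a η)) * f₁ η)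
    (hm₂ : ∀ ξ ∈ Set.Icc (-N) N,
      0 ≤ (∫ η in (-N)..ξ, (-(a η)) * f₂ η) + MN * max (ξ - u₂) 0) :
    -∫ ξ in (-N)..N, (-(a ξ)) * f₁ ξ * f₂ ξ ≤ Mb * max (u₁ - u₂) 0 := by
  obtain ⟨hu₁l, hu₁r⟩ := abs_lt.mp hu₁
  obtain ⟨hu₂l, hu₂r⟩ := abs_lt.mp hu₂
  set m := min u₁ u₂
  have hm : -N ≤ m := (lt_min hu₁l hu₂l).le
  have hmu₁ : m ≤ u₁ := min_le_left _ _
  have haf₁ : IntegrableOn (fun ξ => -a ξ * f₁ ξ) (Icc (-N) N) :=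
    ha.neg.integrableOn_Icc.mul_of_top_left (hf₁_anti.memLp_isCompact isCompact_Icc)
  have haf₂ : IntegrableOn (fun ξ => -a ξ * f₂ ξ) (Icc (-N) N) :=
    ha.neg.integrableOn_Icc.mul_of_top_left (hf₂_anti.memLp_isCompact isCompact_Icc)
  have right : ∫ ξ in u₁..N, -(-a ξ * f₁ ξ * f₂ ξ) ≤ 0 := by
    have hIcc : Icc u₁ N ⊆ Icc (-N) N := Icc_subset_Icc hu₁l.le le_rfl
    calc ∫ ξ in u₁..N, -(-a ξ * f₁ ξ * f₂ ξ) = ∫ ξ in u₁..N, -f₂ ξ * (-a ξ * f₁ ξ) :=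
          integral_congr fun ξ _ => by ring
      _ ≤ 0 := integral_mul_nonpos_of_monotoneOn hu₁r.le (hf₂_anti.mono hIcc).neg
          (fun ξ hξ => neg_nonneg.mpr (hf₂_mem ξ (hIcc hξ)).2)
          ((intervalIntegrable_iff_integrableOn_Icc_of_le hu₁r.le).2 (haf₁.mono_set hIcc))
          (fun ξ hξ => by simpa [max_eq_right (sub_nonpos.mpr hξ.1)] using hm₁ ξ (hIcc hξ))
  have left : ∫ ξ in (-N)..m, -(-a ξ * f₁ ξ * f₂ ξ) ≤ 0 := by
    have hIcc : Icc (-N) m ⊆ Icc (-N) N := Icc_subset_Icc le_rfl (hmu₁.trans hu₁r.le)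
    calc ∫ ξ in (-N)..m, -(-a ξ * f₁ ξ * f₂ ξ) = ∫ ξ in (-N)..m, f₁ ξ * -(-a ξ * f₂ ξ) :=
          integral_congr fun ξ _ => by ring
      _ ≤ 0 := integral_mul_nonpos_of_antitoneOn hm (hf₁_anti.mono hIcc)
          (fun ξ hξ => (hf₁_mem ξ (hIcc hξ)).1)
          ((intervalIntegrable_iff_integrableOn_Icc_of_le hm).2 (haf₂.mono_set hIcc)).neg
          (fun ξ hξ => by
            have hξu₂ : ξ - u₂ ≤ 0 := by linarith [hξ.2, min_le_right u₁ u₂]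
            simpa [max_eq_right hξu₂] using hm₂ ξ (hIcc hξ))
  have window : ∀ ξ ∈ Ioc m u₁, ‖-(-a ξ * f₁ ξ * f₂ ξ)‖ ≤ Mb := by
    intro ξ hξ
    have hξN : ξ ∈ Icc (-N) N := ⟨by linarith [hξ.1], by linarith [hξ.2]⟩
    have hξu : |ξ| ≤ max |u₁| |u₂| := by
      grind [abs_le, neg_abs_le, le_abs_self, le_max_left, le_max_right, min_le_right]
    obtain ⟨h₁0, h₁1⟩ := hf₁_mem ξ hξN
    obtain ⟨h₂0, h₂1⟩ := hf₂_mem ξ hξN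
    calc ‖-(-a ξ * f₁ ξ * f₂ ξ)‖ = |a ξ| * |f₁ ξ| * |f₂ ξ| := by simp
      _ ≤ |a ξ| * 1 * 1 := by
        gcongr
        exacts [abs_le.mpr ⟨by linarith, h₁1⟩, abs_le.mpr ⟨h₂0, by linarith⟩]
      _ ≤ Mb := by simpa using hMb ξ hξu
  have hwindow : u₁ - m = max (u₁ - u₂) 0 := by grind
  rw [← intervalIntegral.integral_neg, ← hwindow]
  exact integral_le_of_nonpos_off_Ioc hm hmu₁ hu₁r.le
    (haf₁.mul_of_top_left (hf₂_anti.memLp_isCompact isCompact_Icc)).neg left right window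

/-- The deterministic boundary estimate (3.13) in the proof of the `L¹`-contraction theorem:
with `f̄₁ : [-N,N] → [0,1]` and `f̄₂ : [-N,N] → [-1,0]` non-increasing, `|u₁|, |u₂| < N`, and
nonnegative truncated boundary defect functions `m̄₁, m̄₂`, one has
`-∫_{-N}^N (-a(ξ)) f̄₁(ξ) f̄₂(ξ) dξ ≤ M_b (u₁ - u₂)⁺`. -/
theorem boundary_defect_estimate
    (N : ℝ) (hN : 0 < N) (a : ℝ → ℝ) (ha : ContinuousOn a (Set.Icc (-N) N))
    (MN : ℝ) (hMN : IsGreatest ((fun ξ => |a ξ|) '' Set.Icc (-N) N) MN)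
    (u₁ u₂ : ℝ) (hu₁ : |u₁| < N) (hu₂ : |u₂| < N)
    (Mb : ℝ) (hMb : ∀ ξ : ℝ, |ξ| ≤ max |u₁| |u₂| → |a ξ| ≤ Mb)
    (f₁ f₂ : ℝ → ℝ)
    (hf₁_mem : ∀ ξ ∈ Set.Icc (-N) N, f₁ ξ ∈ Set.Icc (0 : ℝ) 1)
    (hf₂_mem : ∀ ξ ∈ Set.Icc (-N) N, f₂ ξ ∈ Set.Icc (-1 : ℝ) 0)
    (hf₁_anti : AntitoneOn f₁ (Set.Icc (-N) N))
    (hf₂_anti : AntitoneOn f₂ (Set.Icc (-N) N))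
    (hm₁ : ∀ ξ ∈ Set.Icc (-N) N,
      0 ≤ MN * max (u₁ - ξ) 0 - ∫ η in ξ..N, (-(a η)) * f₁ η)
    (hm₂ : ∀ ξ ∈ Set.Icc (-N) N,
      0 ≤ (∫ η in (-N)..ξ, (-(a η)) * f₂ η) + MN * max (ξ - u₂) 0) :
    -∫ ξ in (-N)..N, (-(a ξ)) * f₁ ξ * f₂ ξ ≤ Mb * max (u₁ - u₂) 0 :=
  boundary_defect_estimate_general N a ha MN u₁ u₂ hu₁ hu₂ Mb hMb f₁ f₂ hf₁_mem hf₂_mem hf₁_anti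
    hf₂_anti hm₁ hm₂
end
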